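/- arXiv:2601.21025 — 6 statements merged into one kernel-verified Lean document; each statement's English description precedes it below -/
import Mathlib

section
/- Let p_1,...,p_N be probability density functions on R^d and let q_1,...,q_N be any positive integrable functions on R^d. Define the classification objective L(q_1,...,q_N) = -(1/N) Σ_{i=1}^N ∫ p_i(y) log( q_i(y) / Σ_{j=1}^N q_j(y) ) dy. Then L(q_1,...,q_N) ≥ L(p_1,...,p_N); that is, taking q_i = p_i for all i minimizes the classification objective over all choices of positive densities. -/
open MeasureTheory

/-- The multi-class classification objective
`L(q) = -(1/N) ∑ i ∫ p i y * log (q i y / ∑ j q j y) dy` over probability densities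
`p_1, …, p_N` on `ℝ^d` is minimized by taking `q_i = p_i`: for any positive integrable
candidates `q_i` (positive on the union of the supports of the `p_i`) with well-defined
integrals, `L(p) ≤ L(q)`. -/
theorem classification_objective_minimized {d N : ℕ}
    (p q : Fin N → EuclideanSpace ℝ (Fin d) → ℝ)
    (hp_meas : ∀ i, Measurable (p i)) (hp_nonneg : ∀ i y, 0 ≤ p i y)
    (hp_one : ∀ i, ∫ y, p i y = 1)
    (hq_meas : ∀ i, Measurable (q i)) (hq_intble : ∀ i, Integrable (q i))
    (hq_pos : ∀ i y, (∃ j, 0 < p j y) → 0 < q i y)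
    (hq_int : ∀ i, Integrable (fun y => p i y * Real.log (q i y / ∑ j, q j y)))
    (hp_int : ∀ i, Integrable (fun y => p i y * Real.log (p i y / ∑ j, p j y))) :
    -(1 / N : ℝ) * ∑ i, ∫ y, p i y * Real.log (p i y / ∑ j, p j y) ≤
      -(1 / N : ℝ) * ∑ i, ∫ y, p i y * Real.log (q i y / ∑ j, q j y) := by
  classical
  set P : EuclideanSpace ℝ (Fin d) → ℝ := fun y => ∑ j, p j y with hPdef
  set Q : EuclideanSpace ℝ (Fin d) → ℝ := fun y => ∑ j, q j y with hQdef
  set s : Fin N → EuclideanSpace ℝ (Fin d) → ℝ := fun i y => q i y * (P y / Q y)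
    with hsdef
  -- each p i is integrable
  have hp_intble : ∀ i, Integrable (p i) := by
    intro i
    by_contra h
    exact one_ne_zero ((hp_one i).symm.trans (integral_undef h))
  have hP_nonneg : ∀ y, 0 ≤ P y := fun y =>
    Finset.sum_nonneg fun j _ => hp_nonneg j y
  have hP_intble : Integrable P :=
    integrable_finset_sum _ fun i _ => hp_intble i
  -- positivity of q's where P > 0
  have hQpos : ∀ y, 0 < P y → (∀ i, 0 < q i y) ∧ 0 < Q y := by
    intro y hPy
    have hex : ∃ j, 0 < p j y := by
      by_contra hno
      push_neg at hno
      have : P y = 0 := Finset.sum_eq_zero fun j _ =>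
        le_antisymm (hno j) (hp_nonneg j y)
      exact absurd this (ne_of_gt hPy)
    have hqi : ∀ i, 0 < q i y := fun i => hq_pos i y hex
    refine ⟨hqi, ?_⟩
    obtain ⟨j, _⟩ := hex
    exact Finset.sum_pos (fun i _ => hqi i) ⟨j, Finset.mem_univ j⟩
  have hs_nonneg : ∀ i y, 0 ≤ s i y := by
    intro i y
    rcases eq_or_lt_of_le (hP_nonneg y) with hPy | hPy
    · simp [hsdef, ← hPy]
    · obtain ⟨hqi, hQy⟩ := hQpos y hPy
      exact le_of_lt (mul_pos (hqi i) (div_pos hPy hQy))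
  have hs_le : ∀ i y, s i y ≤ P y := by
    intro i y
    rcases eq_or_lt_of_le (hP_nonneg y) with hPy | hPy
    · simp [hsdef, ← hPy]
    · obtain ⟨hqi, hQy⟩ := hQpos y hPy
      have hqQ : q i y ≤ Q y :=
        Finset.single_le_sum (fun j _ => (hqi j).le) (Finset.mem_univ i)
      calc s i y = P y * (q i y / Q y) := by rw [hsdef]; ring
        _ ≤ P y * 1 := by
            apply mul_le_mul_of_nonneg_left _ hPy.le
            exact (div_le_one hQy).mpr hqQ
        _ = P y := mul_one _
  have hq_int' : ∀ i, Integrable (fun y => p i y * Real.log (q i y / Q y)) := hq_int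
  have hp_int' : ∀ i, Integrable (fun y => p i y * Real.log (p i y / P y)) := hp_int
  have hs_intble : ∀ i, Integrable (s i) := by
    intro i
    refine Integrable.mono' hP_intble ?_ ?_
    · exact ((hq_meas i).mul
        ((Finset.measurable_sum _ fun j _ => hp_meas j).div
          (Finset.measurable_sum _ fun j _ => hq_meas j))).aestronglyMeasurable
    · filter_upwards with y
      rw [Real.norm_eq_abs, abs_of_nonneg (hs_nonneg i y)]
      exact hs_le i y
  -- key pointwise inequality
  have key : ∀ i y, p i y * Real.log (q i y / Q y) ≤
      p i y * Real.log (p i y / P y) + (s i y - p i y) := by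
    intro i y
    rcases eq_or_lt_of_le (hp_nonneg i y) with hpi | hpi
    · simp only [← hpi, zero_mul, zero_add, sub_zero]
      exact hs_nonneg i y
    · have hPy : 0 < P y :=
        lt_of_lt_of_le hpi
          (Finset.single_le_sum (fun j _ => hp_nonneg j y) (Finset.mem_univ i))
      obtain ⟨hqi, hQy⟩ := hQpos y hPy
      have hsi : 0 < s i y := mul_pos (hqi i) (div_pos hPy hQy)
      have ht : 0 < s i y / p i y := div_pos hsi hpi
      have hlog := Real.log_le_sub_one_of_pos ht
      have hlogeq : Real.log (s i y / p i y) =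
          Real.log (q i y / Q y) - Real.log (p i y / P y) := by
        rw [Real.log_div hsi.ne' hpi.ne', Real.log_div (hqi i).ne' hQy.ne',
          Real.log_div hpi.ne' hPy.ne',
          show s i y = q i y * (P y / Q y) from rfl,
          Real.log_mul (hqi i).ne' (div_pos hPy hQy).ne',
          Real.log_div hPy.ne' hQy.ne']
        ring
      have hmul := mul_le_mul_of_nonneg_left hlog hpi.le
      rw [hlogeq] at hmul
      have hps : p i y * (s i y / p i y - 1) = s i y - p i y := by
        field_simp
      rw [hps] at hmul
      linarith
  -- integrate the inequality
  have step : ∀ i, ∫ y, p i y * Real.log (q i y / Q y) ≤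
      (∫ y, p i y * Real.log (p i y / P y)) + ((∫ y, s i y) - 1) := by
    intro i
    have hg : Integrable (fun y => s i y - p i y) :=
      (hs_intble i).sub (hp_intble i)
    have h1 : Integrable (fun y =>
        p i y * Real.log (p i y / P y) + (s i y - p i y)) :=
      (hp_int' i).add hg
    have := integral_mono (hq_int' i) h1 (key i)
    rwa [integral_add (hp_int' i) hg,
      integral_sub (hs_intble i) (hp_intble i), hp_one i] at this
  -- sum of s i equals P
  have hsum_s : ∀ y, ∑ i, s i y = P y := by
    intro y
    rcases eq_or_lt_of_le (hP_nonneg y) with hPy | hPy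
    · simp [hsdef, ← hPy]
    · obtain ⟨_, hQy⟩ := hQpos y hPy
      rw [show (∑ i, s i y) = (∑ i, q i y) * (P y / Q y) by
        rw [Finset.sum_mul]]
      rw [show (∑ i, q i y) = Q y from rfl]
      field_simp
  have hsum_int : ∑ i, ∫ y, s i y = (N : ℝ) := by
    rw [← integral_finset_sum _ fun i _ => hs_intble i]
    have : (fun y => ∑ i, s i y) = P := funext hsum_s
    rw [this, hPdef, integral_finset_sum _ fun i _ => hp_intble i]
    simp [hp_one]
  -- sum up
  have main : ∑ i, ∫ y, p i y * Real.log (q i y / Q y) ≤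
      ∑ i, ∫ y, p i y * Real.log (p i y / P y) := by
    calc ∑ i, ∫ y, p i y * Real.log (q i y / Q y)
        ≤ ∑ i, ((∫ y, p i y * Real.log (p i y / P y)) + ((∫ y, s i y) - 1)) :=
          Finset.sum_le_sum fun i _ => step i
      _ = (∑ i, ∫ y, p i y * Real.log (p i y / P y)) + ((∑ i, ∫ y, s i y) - N) := by
          rw [Finset.sum_add_distrib, Finset.sum_sub_distrib]
          simp
      _ = ∑ i, ∫ y, p i y * Real.log (p i y / P y) := by
          rw [hsum_int]; ring
  have hN : (0 : ℝ) ≤ 1 / N := by positivity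
  show -(1 / N : ℝ) * ∑ i, ∫ y, p i y * Real.log (p i y / P y) ≤
      -(1 / N : ℝ) * ∑ i, ∫ y, p i y * Real.log (q i y / Q y)
  nlinarith [main]
end

section
/- With the setup of the multi-class classification objective, equality L(q_1,...,q_N) = L(p_1,...,p_N) holds if and only if for almost every y (with respect to the mixture measure (1/N)Σ_i p_i) and every i, q_i(y) / Σ_j q_j(y) = p_i(y) / Σ_j p_j(y). In particular, any minimizer satisfies q_i(y) = c(y) p_i(y) for a common positive measurable function c independent of i, almost everywhere on the union of supports. -/
open MeasureTheory


lemma gibbs_aux {N : ℕ} (a b : Fin N → ℝ) (ha : ∀ i, 0 ≤ a i) (hb : ∀ i, 0 < b i)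
    (hj : ∃ j, 0 < a j) :
    (0 ≤ ∑ i, a i * (Real.log (a i / ∑ j, a j) - Real.log (b i / ∑ j, b j))) ∧
    ((∑ i, a i * (Real.log (a i / ∑ j, a j) - Real.log (b i / ∑ j, b j))) = 0 →
      ∀ i, b i / ∑ j, b j = a i / ∑ j, a j) := by
  obtain ⟨j₀, hj₀⟩ := hj
  have hN : 0 < N := Fin.pos_iff_nonempty.mpr ⟨j₀⟩
  set A := ∑ j, a j with hA_def
  set B := ∑ j, b j with hB_def
  have hA : 0 < A := Finset.sum_pos' (fun i _ => ha i) ⟨j₀, Finset.mem_univ _, hj₀⟩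
  have hB : 0 < B := Finset.sum_pos (fun i _ => hb i) ⟨j₀, Finset.mem_univ _⟩
  have key : ∀ i, a i - A / B * b i ≤ a i * (Real.log (a i / A) - Real.log (b i / B)) := by
    intro i
    rcases eq_or_lt_of_le (ha i) with h0 | h0
    · rw [← h0]
      simp only [zero_mul, zero_sub]
      nlinarith [div_pos hA hB, (hb i).le, mul_nonneg (div_pos hA hB).le (hb i).le]
    · set x := (b i * A) / (a i * B) with hx_def
      have hx : 0 < x := div_pos (mul_pos (hb i) hA) (mul_pos h0 hB)
      have hlog : Real.log x ≤ x - 1 := Real.log_le_sub_one_of_pos hx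
      have hlx : Real.log x = Real.log (b i / B) - Real.log (a i / A) := by
        rw [hx_def, Real.log_div (mul_pos (hb i) hA).ne' (mul_pos h0 hB).ne',
          Real.log_mul (hb i).ne' hA.ne', Real.log_mul h0.ne' hB.ne',
          Real.log_div (hb i).ne' hB.ne', Real.log_div h0.ne' hA.ne']
        ring
      have hax : a i * x = A / B * b i := by
        rw [hx_def]; field_simp
      have : a i * (Real.log (a i / A) - Real.log (b i / B)) = -(a i * Real.log x) := by
        rw [hlx]; ring
      rw [this]
      nlinarith [mul_le_mul_of_nonneg_left hlog (ha i)]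
  have hsum0 : ∑ i, (a i - A / B * b i) = 0 := by
    rw [Finset.sum_sub_distrib, ← Finset.mul_sum, ← hA_def, ← hB_def]
    field_simp
    ring
  constructor
  · calc (0:ℝ) = ∑ i, (a i - A / B * b i) := hsum0.symm
      _ ≤ _ := Finset.sum_le_sum fun i _ => key i
  · intro heq i
    have hterm : ∀ i ∈ Finset.univ,
        (0:ℝ) ≤ a i * (Real.log (a i / A) - Real.log (b i / B)) - (a i - A / B * b i) :=
      fun i _ => sub_nonneg.mpr (key i)
    have hsum : ∑ i, (a i * (Real.log (a i / A) - Real.log (b i / B)) - (a i - A / B * b i)) = 0 := by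
      rw [Finset.sum_sub_distrib, hsum0, heq]; ring
    have hall := (Finset.sum_eq_zero_iff_of_nonneg hterm).mp hsum
    have heqi : a i * (Real.log (a i / A) - Real.log (b i / B)) = a i - A / B * b i := by
      have := hall i (Finset.mem_univ i)
      linarith
    -- first show a i > 0
    have hai : 0 < a i := by
      rcases eq_or_lt_of_le (ha i) with h0 | h0
      · exfalso
        rw [← h0] at heqi
        simp only [zero_mul, zero_sub] at heqi
        have : 0 < A / B * b i := mul_pos (div_pos hA hB) (hb i)
        linarith
      · exact h0
    set x := (b i * A) / (a i * B) with hx_def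
    have hx : 0 < x := div_pos (mul_pos (hb i) hA) (mul_pos hai hB)
    have hx1 : x = 1 := by
      by_contra hne
      have hlt : Real.log x < x - 1 := Real.log_lt_sub_one_of_pos hx hne
      have hlx : Real.log x = Real.log (b i / B) - Real.log (a i / A) := by
        rw [hx_def, Real.log_div (mul_pos (hb i) hA).ne' (mul_pos hai hB).ne',
          Real.log_mul (hb i).ne' hA.ne', Real.log_mul hai.ne' hB.ne',
          Real.log_div (hb i).ne' hB.ne', Real.log_div hai.ne' hA.ne']
        ring
      have hax : a i * x = A / B * b i := by
        rw [hx_def]; field_simp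
      have h1 : a i * (Real.log (a i / A) - Real.log (b i / B)) = -(a i * Real.log x) := by
        rw [hlx]; ring
      rw [h1] at heqi
      nlinarith [mul_lt_mul_of_pos_left hlt hai]
    have : b i * A = a i * B := by
      have := hx1
      rw [hx_def, div_eq_one_iff_eq (mul_pos hai hB).ne'] at this
      linarith [this]
    rw [div_eq_div_iff hB.ne' hA.ne']
    linarith

/-- Equality case of the multi-class classification objective: with
`L(q) = -(1/N) ∑ i ∫ p i y * log (q i y / ∑ j q j y) dy`, equality `L(q) = L(p)` holds if
and only if, for almost every `y` with respect to the mixture measure with density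
`(1/N) ∑ i p i`, the posteriors agree: `q i y / ∑ j q j y = p i y / ∑ j p j y` for all `i`.
In particular, any minimizer satisfies `q i = c · p i` for a common positive measurable
function `c` independent of `i`, almost everywhere with respect to the mixture. -/
theorem classification_objective_equality_iff {d N : ℕ}
    (p q : Fin N → EuclideanSpace ℝ (Fin d) → ℝ)
    (hp_meas : ∀ i, Measurable (p i)) (hp_nonneg : ∀ i y, 0 ≤ p i y)
    (hp_one : ∀ i, ∫ y, p i y = 1)
    (hq_meas : ∀ i, Measurable (q i)) (hq_intble : ∀ i, Integrable (q i))
    (hq_pos : ∀ i y, (∃ j, 0 < p j y) → 0 < q i y)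
    (hq_int : ∀ i, Integrable (fun y => p i y * Real.log (q i y / ∑ j, q j y)))
    (hp_int : ∀ i, Integrable (fun y => p i y * Real.log (p i y / ∑ j, p j y))) :
    ((-(1 / N : ℝ) * ∑ i, ∫ y, p i y * Real.log (q i y / ∑ j, q j y)) =
        -(1 / N : ℝ) * ∑ i, ∫ y, p i y * Real.log (p i y / ∑ j, p j y) ↔
      ∀ᵐ y ∂(volume.withDensity fun y => ENNReal.ofReal ((1 / N : ℝ) * ∑ i, p i y)),
        ∀ i, q i y / ∑ j, q j y = p i y / ∑ j, p j y) ∧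
    ((-(1 / N : ℝ) * ∑ i, ∫ y, p i y * Real.log (q i y / ∑ j, q j y)) =
        -(1 / N : ℝ) * ∑ i, ∫ y, p i y * Real.log (p i y / ∑ j, p j y) →
      ∃ c : EuclideanSpace ℝ (Fin d) → ℝ, Measurable c ∧
        ∀ᵐ y ∂(volume.withDensity fun y => ENNReal.ofReal ((1 / N : ℝ) * ∑ i, p i y)),
          0 < c y ∧ ∀ i, q i y = c y * p i y) := by
  rcases Nat.eq_zero_or_pos N with hN0 | hN
  · subst hN0
    have hdens : (fun y : EuclideanSpace ℝ (Fin d) =>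
        ENNReal.ofReal ((1 / (0:ℕ) : ℝ) * ∑ i, p i y)) = 0 := by
      funext y; simp
    rw [hdens, MeasureTheory.withDensity_zero]
    refine ⟨by simp [MeasureTheory.ae_zero], fun _ => ⟨fun _ => 1, measurable_const, by
      simp [MeasureTheory.ae_zero]⟩⟩
  -- main case : 0 < N
  have hNne : (1 / N : ℝ) ≠ 0 := by positivity
  set F : EuclideanSpace ℝ (Fin d) → ℝ := fun y =>
    ∑ i, p i y * (Real.log (p i y / ∑ j, p j y) - Real.log (q i y / ∑ j, q j y)) with hF_def
  have hF_int : Integrable F := by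
    have : Integrable (fun y => ∑ i, (p i y * Real.log (p i y / ∑ j, p j y)
        - p i y * Real.log (q i y / ∑ j, q j y))) :=
      integrable_finset_sum _ (fun i _ => (hp_int i).sub (hq_int i))
    simpa [hF_def, mul_sub] using this
  have hF_nonneg : ∀ y, 0 ≤ F y := by
    intro y
    by_cases h : ∃ j, 0 < p j y
    · exact (gibbs_aux (fun i => p i y) (fun i => q i y) (fun i => hp_nonneg i y)
        (fun i => hq_pos i y h) h).1
    · have hz : ∀ i, p i y = 0 := fun i =>
        le_antisymm (not_lt.mp fun hlt => h ⟨i, hlt⟩) (hp_nonneg i y)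
      simp [hF_def, hz]
  have hF_integral : ∫ y, F y = (∑ i, ∫ y, p i y * Real.log (p i y / ∑ j, p j y))
      - ∑ i, ∫ y, p i y * Real.log (q i y / ∑ j, q j y) := by
    have h1 : ∫ y, F y = ∑ i, ∫ y, (p i y * Real.log (p i y / ∑ j, p j y)
        - p i y * Real.log (q i y / ∑ j, q j y)) := by
      simp only [hF_def, mul_sub]
      exact integral_finset_sum _ (fun i _ => (hp_int i).sub (hq_int i))
    rw [h1, ← Finset.sum_sub_distrib]
    exact Finset.sum_congr rfl fun i _ => integral_sub (hp_int i) (hq_int i)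
  have hdens_meas : Measurable (fun y : EuclideanSpace ℝ (Fin d) =>
      ENNReal.ofReal ((1 / N : ℝ) * ∑ i, p i y)) := by
    exact ENNReal.measurable_ofReal.comp
      ((measurable_const.mul (Finset.measurable_sum _ (fun i _ => hp_meas i))))
  have hdens_ne : ∀ y, (ENNReal.ofReal ((1 / N : ℝ) * ∑ i, p i y) ≠ 0) ↔ ∃ j, 0 < p j y := by
    intro y
    rw [Ne, ENNReal.ofReal_eq_zero, not_le]
    constructor
    · intro h
      by_contra hc
      push_neg at hc
      have hz : ∀ i, p i y = 0 := fun i => le_antisymm (hc i) (hp_nonneg i y)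
      simp [hz] at h
    · intro ⟨j, hj⟩
      have hS : 0 < ∑ i, p i y :=
        Finset.sum_pos' (fun i _ => hp_nonneg i y) ⟨j, Finset.mem_univ _, hj⟩
      positivity
  have heq_iff : ((-(1 / N : ℝ) * ∑ i, ∫ y, p i y * Real.log (q i y / ∑ j, q j y)) =
      -(1 / N : ℝ) * ∑ i, ∫ y, p i y * Real.log (p i y / ∑ j, p j y)) ↔ ∫ y, F y = 0 := by
    rw [hF_integral, sub_eq_zero]
    constructor
    · intro h
      have := mul_left_cancel₀ (neg_ne_zero.mpr hNne) h
      exact this.symm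
    · intro h; rw [h]
  have hzero_iff : (∫ y, F y = 0) ↔ (∀ᵐ y ∂(volume.withDensity fun y =>
      ENNReal.ofReal ((1 / N : ℝ) * ∑ i, p i y)),
      ∀ i, q i y / ∑ j, q j y = p i y / ∑ j, p j y) := by
    rw [integral_eq_zero_iff_of_nonneg hF_nonneg hF_int, ae_withDensity_iff hdens_meas]
    constructor
    · intro hF0
      filter_upwards [hF0] with y hFy hdne i
      have hex : ∃ j, 0 < p j y := (hdens_ne y).mp hdne
      exact (gibbs_aux (fun i => p i y) (fun i => q i y) (fun i => hp_nonneg i y)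
        (fun i => hq_pos i y hex) hex).2 hFy i
    · intro hae
      filter_upwards [hae] with y hy
      by_cases h : ∃ j, 0 < p j y
      · have hpost := hy ((hdens_ne y).mpr h)
        have : ∀ i ∈ Finset.univ, p i y * (Real.log (p i y / ∑ j, p j y)
            - Real.log (q i y / ∑ j, q j y)) = 0 := by
          intro i _
          rw [hpost i]
          ring
        simpa [hF_def] using Finset.sum_eq_zero this
      · have hz : ∀ i, p i y = 0 := fun i =>
          le_antisymm (not_lt.mp fun hlt => h ⟨i, hlt⟩) (hp_nonneg i y)
        simp [hF_def, hz]
  refine ⟨heq_iff.trans hzero_iff, fun heq => ?_⟩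
  have hae := (heq_iff.trans hzero_iff).mp heq
  rw [ae_withDensity_iff hdens_meas] at hae
  refine ⟨fun y => if 0 < ∑ j, p j y then (∑ j, q j y) / ∑ j, p j y else 1, ?_, ?_⟩
  · exact Measurable.ite (measurableSet_lt measurable_const
      (Finset.measurable_sum _ (fun i _ => hp_meas i)))
      ((Finset.measurable_sum _ (fun i _ => hq_meas i)).div
        (Finset.measurable_sum _ (fun i _ => hp_meas i))) measurable_const
  · rw [ae_withDensity_iff hdens_meas]
    filter_upwards [hae] with y hy hdne
    have hex : ∃ j, 0 < p j y := (hdens_ne y).mp hdne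
    obtain ⟨j, hj⟩ := hex
    have hSp : 0 < ∑ i, p i y :=
      Finset.sum_pos' (fun i _ => hp_nonneg i y) ⟨j, Finset.mem_univ _, hj⟩
    have hSq : 0 < ∑ i, q i y :=
      Finset.sum_pos (fun i _ => hq_pos i y ⟨j, hj⟩) ⟨j, Finset.mem_univ _⟩
    have hc : (if 0 < ∑ j, p j y then (∑ j, q j y) / ∑ j, p j y else 1)
        = (∑ j, q j y) / ∑ j, p j y := if_pos hSp
    rw [hc]
    refine ⟨div_pos hSq hSp, fun i => ?_⟩
    have hpost := hy hdne i
    rw [div_eq_div_iff hSq.ne' hSp.ne'] at hpost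
    field_simp
    linarith [hpost]
end

section
/- Let p_1,...,p_N be probability densities on a connected open set Ω ⊆ R^d, each strictly positive and C^1 on Ω. Suppose q_1,...,q_N are strictly positive C^1 probability densities on Ω satisfying both (i) ∇ log q_i = ∇ log p_i on Ω for all i, and (ii) q_i(y)/Σ_j q_j(y) = p_i(y)/Σ_j p_j(y) for all y ∈ Ω and all i. Then q_i = p_i on Ω for all i. -/
open MeasureTheory

/-- A function with zero Fréchet derivative on a preconnected open set is constant there. -/
lemma aux_const_of_fderiv_zero {E : Type*} [NormedAddCommGroup E] [NormedSpace ℝ E]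
    {Ω : Set E} (hΩo : IsOpen Ω) (hΩc : IsPreconnected Ω) {f : E → ℝ}
    (hfd : ∀ y ∈ Ω, DifferentiableAt ℝ f y) (hf0 : ∀ y ∈ Ω, fderiv ℝ f y = 0)
    {x₀ : E} (hx₀ : x₀ ∈ Ω) : ∀ y ∈ Ω, f y = f x₀ := by
  have key : ∀ x ∈ Ω, ∃ ε > 0, Metric.ball x ε ⊆ Ω ∧
      ∀ y ∈ Metric.ball x ε, f y = f x := by
    intro x hx
    obtain ⟨ε, hε, hball⟩ := Metric.isOpen_iff.1 hΩo x hx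
    refine ⟨ε, hε, hball, fun y hy => ?_⟩
    refine (convex_ball x ε).is_const_of_fderivWithin_eq_zero
      (fun z hz => (hfd z (hball hz)).differentiableWithinAt)
      (fun z hz => ?_) hy (Metric.mem_ball_self hε)
    rw [fderivWithin_of_isOpen Metric.isOpen_ball hz]
    exact hf0 z (hball hz)
  set u : Set E := {y | y ∈ Ω ∧ f y = f x₀} with hu
  set v : Set E := {y | y ∈ Ω ∧ f y ≠ f x₀} with hv
  have hou : IsOpen u := by
    rw [Metric.isOpen_iff]
    rintro y ⟨hyΩ, hyf⟩
    obtain ⟨ε, hε, hball, hconst⟩ := key y hyΩ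
    exact ⟨ε, hε, fun z hz => ⟨hball hz, (hconst z hz).trans hyf⟩⟩
  have hov : IsOpen v := by
    rw [Metric.isOpen_iff]
    rintro y ⟨hyΩ, hyf⟩
    obtain ⟨ε, hε, hball, hconst⟩ := key y hyΩ
    exact ⟨ε, hε, fun z hz => ⟨hball hz, (hconst z hz).symm ▸ hyf⟩⟩
  have hdisj : Disjoint u v := by
    rw [Set.disjoint_left]
    rintro y ⟨_, h1⟩ ⟨_, h2⟩
    exact h2 h1
  have hsub : Ω ⊆ u ∪ v := fun y hy => by
    by_cases h : f y = f x₀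
    · exact Or.inl ⟨hy, h⟩
    · exact Or.inr ⟨hy, h⟩
  have : Ω ⊆ u :=
    hΩc.subset_left_of_subset_union hou hov hdisj hsub ⟨x₀, hx₀, hx₀, rfl⟩
  exact fun y hy => (this hy).2

/-- Uniqueness from joint score-matching and classification optimality: let `Ω ⊆ ℝ^d` be a
connected open set and `p_1, …, p_N` strictly positive `C¹` probability densities on `Ω`.
If `q_1, …, q_N` are strictly positive `C¹` probability densities on `Ω` with
(i) `∇ log q_i = ∇ log p_i` on `Ω` for all `i` (score matching optimality), and
(ii) `q_i / ∑_j q_j = p_i / ∑_j p_j` on `Ω` for all `i` (classification optimality),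
then `q_i = p_i` on `Ω` for all `i`. -/
theorem dsm_clf_joint_uniqueness {d N : ℕ}
    (Ω : Set (EuclideanSpace ℝ (Fin d))) (hΩo : IsOpen Ω) (hΩc : IsConnected Ω)
    (p q : Fin N → EuclideanSpace ℝ (Fin d) → ℝ)
    (hp_pos : ∀ i, ∀ y ∈ Ω, 0 < p i y) (hq_pos : ∀ i, ∀ y ∈ Ω, 0 < q i y)
    (hp_c1 : ∀ i, ContDiffOn ℝ 1 (p i) Ω) (hq_c1 : ∀ i, ContDiffOn ℝ 1 (q i) Ω)
    (hp_one : ∀ i, ∫ y in Ω, p i y = 1) (hq_one : ∀ i, ∫ y in Ω, q i y = 1)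
    (hscore : ∀ i, ∀ y ∈ Ω,
      gradient (fun z => Real.log (q i z)) y = gradient (fun z => Real.log (p i z)) y)
    (hpost : ∀ i, ∀ y ∈ Ω, q i y / ∑ j, q j y = p i y / ∑ j, p j y) :
    ∀ i, ∀ y ∈ Ω, q i y = p i y := by
  intro i
  obtain ⟨x₀, hx₀⟩ := hΩc.nonempty
  -- differentiability of log q i and log p i on Ω
  have hqd : ∀ y ∈ Ω, DifferentiableAt ℝ (fun z => Real.log (q i z)) y := fun y hy =>
    DifferentiableAt.log
      (((hq_c1 i).differentiableOn one_ne_zero).differentiableAt (hΩo.mem_nhds hy))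
      (ne_of_gt (hq_pos i y hy))
  have hpd : ∀ y ∈ Ω, DifferentiableAt ℝ (fun z => Real.log (p i z)) y := fun y hy =>
    DifferentiableAt.log
      (((hp_c1 i).differentiableOn one_ne_zero).differentiableAt (hΩo.mem_nhds hy))
      (ne_of_gt (hp_pos i y hy))
  -- the difference of logs has zero derivative
  set f : EuclideanSpace ℝ (Fin d) → ℝ :=
    fun z => Real.log (q i z) - Real.log (p i z) with hf
  have hfd : ∀ y ∈ Ω, DifferentiableAt ℝ f y := fun y hy => (hqd y hy).sub (hpd y hy)
  have hf0 : ∀ y ∈ Ω, fderiv ℝ f y = 0 := by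
    intro y hy
    have hfe : fderiv ℝ (fun z => Real.log (q i z)) y
        = fderiv ℝ (fun z => Real.log (p i z)) y := by
      have := hscore i y hy
      unfold gradient at this
      exact (InnerProductSpace.toDual ℝ _).symm.injective.eq_iff.mp this
    rw [hf, fderiv_fun_sub (hqd y hy) (hpd y hy), hfe, sub_self]
  have hconst := aux_const_of_fderiv_zero hΩo hΩc.isPreconnected hfd hf0 hx₀
  -- q i = exp C * p i on Ω
  set C : ℝ := f x₀ with hC
  have hqp : ∀ y ∈ Ω, q i y = Real.exp C * p i y := by
    intro y hy
    have h1 : Real.log (q i y) = C + Real.log (p i y) := by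
      have := hconst y hy
      simp only [hf] at this
      linarith
    calc q i y = Real.exp (Real.log (q i y)) := (Real.exp_log (hq_pos i y hy)).symm
      _ = Real.exp C * Real.exp (Real.log (p i y)) := by rw [h1, Real.exp_add]
      _ = Real.exp C * p i y := by rw [Real.exp_log (hp_pos i y hy)]
  -- integrate to get exp C = 1
  have hint : (1 : ℝ) = Real.exp C := by
    calc (1 : ℝ) = ∫ y in Ω, q i y := (hq_one i).symm
      _ = ∫ y in Ω, Real.exp C * p i y :=
          setIntegral_congr_fun hΩo.measurableSet (fun y hy => hqp y hy)
      _ = Real.exp C * ∫ y in Ω, p i y := MeasureTheory.integral_const_mul _ _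
      _ = Real.exp C := by rw [hp_one i, mul_one]
  intro y hy
  rw [hqp y hy, ← hint, one_mul]
end

section
/- Blindness of score matching: let g_1,...,g_K be C^1 probability densities on R^d with pairwise disjoint open supports X_1,...,X_K, such that each g_k and ∇g_k vanish outside X_k. Let α, β be two probability weight vectors with all coordinates strictly positive, and set p = Σ_k α_k g_k and q = Σ_k β_k g_k. Then the Fisher divergence FD(p,q) = ∫ p(x) ‖∇ log p(x) − ∇ log q(x)‖² dx equals 0, even when α ≠ β. -/
open MeasureTheory

lemma grad_log_const_mul {d : ℕ} (f : EuclideanSpace ℝ (Fin d) → ℝ)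
    (hf : ContDiff ℝ 1 f) (c : ℝ) (hc : c ≠ 0) (x : EuclideanSpace ℝ (Fin d))
    (hx : f x ≠ 0) :
    gradient (fun z => Real.log (c * f z)) x = (f x)⁻¹ • gradient f x := by
  have hD : HasFDerivAt f (fderiv ℝ f x) x :=
    ((hf.differentiable one_ne_zero) x).hasFDerivAt
  have h1 : HasFDerivAt (fun z => c * f z) (c • fderiv ℝ f x) x := hD.const_mul c
  have h2 : HasFDerivAt (fun z => Real.log (c * f z))
      ((c * f x)⁻¹ • (c • fderiv ℝ f x)) x := h1.log (mul_ne_zero hc hx)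
  have h3 := h2.hasGradientAt.gradient
  rw [h3, _root_.map_smul, _root_.map_smul]
  have : gradient f x = (InnerProductSpace.toDual ℝ _).symm (fderiv ℝ f x) := rfl
  rw [← this, smul_smul, mul_inv]
  congr 1
  field_simp

/-- Blindness of score matching: let `g_1, …, g_K` be `C¹` probability densities on `ℝ^d`
with pairwise disjoint open supports `X_1, …, X_K`, such that each `g_k` and its gradient
vanish outside `X_k`. For strictly positive probability weight vectors `α, β`, the
Fisher divergence between the mixtures `p = ∑ α_k g_k` and `q = ∑ β_k g_k`,
`∫ p(x) ‖∇ log p(x) − ∇ log q(x)‖² dx`, equals `0` — even when `α ≠ β`.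
(The integrand is `0` wherever `p(x) = 0` since it carries the factor `p(x)`.) -/
theorem score_matching_blindness {d K : ℕ}
    (g : Fin K → EuclideanSpace ℝ (Fin d) → ℝ)
    (X : Fin K → Set (EuclideanSpace ℝ (Fin d)))
    (hX_open : ∀ k, IsOpen (X k))
    (hX_disj : ∀ k l, k ≠ l → Disjoint (X k) (X l))
    (hg_c1 : ∀ k, ContDiff ℝ 1 (g k))
    (hg_nonneg : ∀ k x, 0 ≤ g k x) (hg_one : ∀ k, ∫ x, g k x = 1)
    (hg_supp : ∀ k, ∀ x ∉ X k, g k x = 0 ∧ gradient (g k) x = 0)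
    (α β : Fin K → ℝ) (hα : ∀ k, 0 < α k) (hβ : ∀ k, 0 < β k)
    (hαs : ∑ k, α k = 1) (hβs : ∑ k, β k = 1) :
    ∫ x, (∑ k, α k * g k x) *
        ‖gradient (fun z => Real.log (∑ k, α k * g k z)) x -
          gradient (fun z => Real.log (∑ k, β k * g k z)) x‖ ^ 2 = 0 := by
  have key : ∀ x, (∑ k, α k * g k x) *
        ‖gradient (fun z => Real.log (∑ k, α k * g k z)) x -
          gradient (fun z => Real.log (∑ k, β k * g k z)) x‖ ^ 2 = 0 := by
    intro x
    by_cases hp : ∀ k, g k x = 0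
    · have : (∑ k, α k * g k x) = 0 := by
        apply Finset.sum_eq_zero; intro k _; rw [hp k, mul_zero]
      rw [this, zero_mul]
    · push_neg at hp
      obtain ⟨k, hk⟩ := hp
      have hxk : x ∈ X k := by
        by_contra h
        exact hk (hg_supp k x h).1
      -- on X k, the sums collapse to the k-th term
      have hcollapse : ∀ (γ : Fin K → ℝ),
          (fun z => Real.log (∑ l, γ l * g l z)) =ᶠ[nhds x]
          (fun z => Real.log (γ k * g k z)) := by
        intro γ
        filter_upwards [(hX_open k).mem_nhds hxk] with z hz
        congr 1
        rw [Finset.sum_eq_single k]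
        · intro l _ hl
          have hzl : z ∉ X l := fun hzl =>
            (hX_disj k l (Ne.symm hl)).ne_of_mem hz hzl rfl
          rw [(hg_supp l z hzl).1, mul_zero]
        · intro h; exact absurd (Finset.mem_univ k) h
      have hgα := ((hcollapse α).gradient_eq).trans
        (grad_log_const_mul (g k) (hg_c1 k) (α k) (hα k).ne' x hk)
      have hgβ := ((hcollapse β).gradient_eq).trans
        (grad_log_const_mul (g k) (hg_c1 k) (β k) (hβ k).ne' x hk)
      rw [hgα, hgβ, sub_self, norm_zero]
      ring
  simp only [key, integral_zero]
end

section
/- Blindness of higher-order score matching: under the same disjoint-support mixture setup, for any x in the support X_k of g_k with g_k(x) > 0, the Hessian of log p at x equals the Hessian of log g_k at x and in particular does not depend on the mixture weights α. Consequently ∫ p ‖∇²log p − ∇²log q‖_F² dx = 0 for mixtures p, q with the same components but different positive weights. -/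
open MeasureTheory

/-- The Hessian of `f : ℝ^d → ℝ` at `x`, as a `d × d` array of reals: the `(i,j)` entry is
the derivative in direction `e_i` of the `j`-th component of the gradient of `f`. -/
noncomputable def hess {d : ℕ} (f : EuclideanSpace ℝ (Fin d) → ℝ)
    (x : EuclideanSpace ℝ (Fin d)) : Fin d → Fin d → ℝ :=
  fun i j => fderiv ℝ (gradient f) x (EuclideanSpace.single i 1) j

lemma hess_congr' {d : ℕ} {f g : EuclideanSpace ℝ (Fin d) → ℝ} {x}
    (h : f =ᶠ[nhds x] g) : hess f x = hess g x := by
  have h1 : gradient f =ᶠ[nhds x] gradient g := by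
    filter_upwards [h.eventuallyEq_nhds] with y hy
    simp [gradient, hy.fderiv_eq]
  funext i j
  simp only [hess, h1.fderiv_eq]

lemma hess_const_add' {d : ℕ} (c : ℝ) (f : EuclideanSpace ℝ (Fin d) → ℝ) (x) :
    hess (fun z => c + f z) x = hess f x := by
  have h : gradient (fun z => c + f z) = gradient f := by
    funext y; simp [gradient, fderiv_const_add]
  funext i j
  simp only [hess]
  rw [h]

lemma hess_log_mix {d K : ℕ}
    (g : Fin K → EuclideanSpace ℝ (Fin d) → ℝ)
    (X : Fin K → Set (EuclideanSpace ℝ (Fin d)))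
    (hX_open : ∀ k, IsOpen (X k))
    (hX_disj : ∀ k l, k ≠ l → Disjoint (X k) (X l))
    (hg_c2 : ∀ k, ContDiff ℝ 2 (g k))
    (hg_supp : ∀ k, ∀ x ∉ X k, g k x = 0 ∧ gradient (g k) x = 0)
    (α : Fin K → ℝ) (hα : ∀ k, 0 < α k)
    (k : Fin K) (x : EuclideanSpace ℝ (Fin d)) (hx : x ∈ X k) (hgx : 0 < g k x) :
    hess (fun z => Real.log (∑ l, α l * g l z)) x =
      hess (fun z => Real.log (g k z)) x := by
  set U := X k ∩ (g k) ⁻¹' Set.Ioi 0 with hUdef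
  have hU : IsOpen U := (hX_open k).inter (isOpen_Ioi.preimage (hg_c2 k).continuous)
  have hxU : x ∈ U := ⟨hx, hgx⟩
  have heq : (fun z => Real.log (∑ l, α l * g l z)) =ᶠ[nhds x]
      (fun z => Real.log (α k) + Real.log (g k z)) := by
    filter_upwards [hU.mem_nhds hxU] with y hy
    have hsum : ∑ l, α l * g l y = α k * g k y := by
      refine Finset.sum_eq_single k (fun l _ hl => ?_) (by simp)
      have hyl : y ∉ X l := Set.disjoint_left.mp (hX_disj k l (Ne.symm hl)) hy.1
      rw [(hg_supp l y hyl).1, mul_zero]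
    have hgy : (0:ℝ) < g k y := hy.2
    rw [hsum, Real.log_mul (hα k).ne' hgy.ne']
  rw [hess_congr' heq, hess_const_add']

/-- Blindness of higher-order score matching: under the disjoint-support mixture setup
(`C²` densities `g_k` with pairwise disjoint open supports, vanishing together with their
gradients outside their supports), for any `x ∈ X_k` with `g_k x > 0` the Hessian of
`log p` at `x` (where `p = ∑ α_k g_k`) equals the Hessian of `log g_k` at `x`, hence does
not depend on the weights `α`; consequently
`∫ p ‖∇² log p − ∇² log q‖_F² dx = 0` for mixtures `p, q` with the same components but
different positive weights. -/
theorem higher_order_score_matching_blindness {d K : ℕ}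
    (g : Fin K → EuclideanSpace ℝ (Fin d) → ℝ)
    (X : Fin K → Set (EuclideanSpace ℝ (Fin d)))
    (hX_open : ∀ k, IsOpen (X k))
    (hX_disj : ∀ k l, k ≠ l → Disjoint (X k) (X l))
    (hg_c2 : ∀ k, ContDiff ℝ 2 (g k))
    (hg_nonneg : ∀ k x, 0 ≤ g k x) (hg_one : ∀ k, ∫ x, g k x = 1)
    (hg_supp : ∀ k, ∀ x ∉ X k, g k x = 0 ∧ gradient (g k) x = 0)
    (α β : Fin K → ℝ) (hα : ∀ k, 0 < α k) (hβ : ∀ k, 0 < β k)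
    (hαs : ∑ k, α k = 1) (hβs : ∑ k, β k = 1) :
    (∀ k, ∀ x ∈ X k, 0 < g k x →
      hess (fun z => Real.log (∑ k, α k * g k z)) x =
        hess (fun z => Real.log (g k z)) x) ∧
    ∫ x, (∑ k, α k * g k x) *
        ∑ i, ∑ j, (hess (fun z => Real.log (∑ k, α k * g k z)) x i j -
          hess (fun z => Real.log (∑ k, β k * g k z)) x i j) ^ 2 = 0 := by
  constructor
  · intro k x hx hgx
    exact hess_log_mix g X hX_open hX_disj hg_c2 hg_supp α hα k x hx hgx
  · have hzero : ∀ x, (∑ k, α k * g k x) *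
        ∑ i, ∑ j, (hess (fun z => Real.log (∑ k, α k * g k z)) x i j -
          hess (fun z => Real.log (∑ k, β k * g k z)) x i j) ^ 2 = 0 := by
      intro x
      by_cases h : ∃ k, x ∈ X k ∧ 0 < g k x
      · obtain ⟨k, hxk, hgk⟩ := h
        have h1 := hess_log_mix g X hX_open hX_disj hg_c2 hg_supp α hα k x hxk hgk
        have h2 := hess_log_mix g X hX_open hX_disj hg_c2 hg_supp β hβ k x hxk hgk
        rw [h1, h2]
        simp
      · push_neg at h
        have hp : ∑ k, α k * g k x = 0 := by
          refine Finset.sum_eq_zero fun l _ => ?_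
          by_cases hxl : x ∈ X l
          · have : g l x = 0 := le_antisymm (h l hxl) (hg_nonneg l x)
            rw [this, mul_zero]
          · rw [(hg_supp l x hxl).1, mul_zero]
        rw [hp, zero_mul]
    simp only [hzero, integral_zero]
end

section
/- The denoising score matching objective and the score matching objective differ by a constant: with Y = X + γZ as above, for any measurable vector field s: R^d → R^d with E[‖s(Y)‖²] < ∞, E[ ‖s(Y) − ∇_y log p(Y|X)‖² ] = E[ ‖s(Y) − ∇ log p(Y)‖² ] + C, where C = E[ ‖∇_y log p(Y|X)‖² ] − E[ ‖∇ log p(Y)‖² ] does not depend on s. In particular, s = ∇ log p minimizes the denoising objective. -/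
open MeasureTheory

/-- The isotropic Gaussian density `N(y; x, γ²I_d)` on `ℝ^d`. -/
noncomputable def gaussDens (d : ℕ) (γ : ℝ) (x y : EuclideanSpace ℝ (Fin d)) : ℝ :=
  (2 * Real.pi * γ ^ 2) ^ (-(d : ℝ) / 2) * Real.exp (-‖y - x‖ ^ 2 / (2 * γ ^ 2))

open MeasureTheory Real
open RealInnerProductSpace

variable {V : Type*} [NormedAddCommGroup V] [InnerProductSpace ℝ V] [FiniteDimensional ℝ V]
  [MeasurableSpace V] [BorelSpace V]

lemma integrable_rexp_neg_mul_sq_norm {b : ℝ} (hb : 0 < b) :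
    Integrable fun v : V => rexp (-b * ‖v‖ ^ 2) := by
  have h := (GaussianFourier.integrable_cexp_neg_mul_sq_norm_add (b := (b : ℂ))
      (by simpa using hb) 0 (0 : V)).norm
  convert h using 2 with v
  rw [Complex.norm_exp]
  norm_num [Complex.add_re, Complex.mul_re]
  left; norm_cast

lemma exp_mul_le {b t : ℝ} (hb : 0 < b) (ht : 0 ≤ t) :
    t * rexp (-b * t ^ 2) ≤ (1 + 2 / b) * rexp (-(b / 2) * t ^ 2) := by
  have h1 : t ≤ 1 + (2 / b) * rexp ((b / 2) * t ^ 2) := by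
    have h2 : (b / 2) * t ^ 2 ≤ rexp ((b / 2) * t ^ 2) := (Real.add_one_le_exp _).trans' (by linarith)
    have h3 : t ≤ 1 + t ^ 2 := by nlinarith [sq_nonneg (t - 1)]
    have h4 : t ^ 2 ≤ (2 / b) * rexp ((b / 2) * t ^ 2) := by
      rw [div_mul_eq_mul_div, le_div_iff₀ hb]
      nlinarith
    linarith
  have he : (0:ℝ) < rexp (-b * t ^ 2) := Real.exp_pos _
  calc t * rexp (-b * t ^ 2) ≤ (1 + (2 / b) * rexp ((b / 2) * t ^ 2)) * rexp (-b * t ^ 2) := by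
        exact mul_le_mul_of_nonneg_right h1 he.le
    _ = rexp (-b * t ^ 2) + (2 / b) * rexp (-(b/2) * t ^ 2) := by
        rw [add_mul, one_mul, mul_assoc, ← Real.exp_add]; ring_nf
    _ ≤ (1 + 2 / b) * rexp (-(b / 2) * t ^ 2) := by
        have : rexp (-b * t ^ 2) ≤ rexp (-(b/2) * t ^ 2) := by
          apply Real.exp_le_exp.2; nlinarith [sq_nonneg t]
        rw [add_mul, one_mul]
        have hb2 : (0:ℝ) ≤ 2 / b := by positivity
        nlinarith [Real.exp_pos (-(b/2) * t ^ 2)]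

section Gauss
variable {d : ℕ} {γ : ℝ}

local notation "H" => EuclideanSpace ℝ (Fin d)

lemma gconst_pos (hγ : 0 < γ) : (0:ℝ) < (2 * Real.pi * γ ^ 2) ^ (-(d : ℝ) / 2) :=
  Real.rpow_pos_of_pos (by positivity) _

lemma gauss_pos (hγ : 0 < γ) (x y : H) : 0 < gaussDens d γ x y :=
  mul_pos (gconst_pos hγ) (Real.exp_pos _)

lemma gauss_eq (x y : H) : gaussDens d γ x y
    = (2 * Real.pi * γ ^ 2) ^ (-(d : ℝ) / 2)
      * Real.exp (-(2 * γ ^ 2)⁻¹ * ‖y - x‖ ^ 2) := by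
  rw [gaussDens]; ring_nf

lemma gauss_le (hγ : 0 < γ) (x y : H) :
    gaussDens d γ x y ≤ (2 * Real.pi * γ ^ 2) ^ (-(d : ℝ) / 2) := by
  have h : Real.exp (-‖y - x‖ ^ 2 / (2 * γ ^ 2)) ≤ 1 := by
    rw [Real.exp_le_one_iff]
    exact div_nonpos_of_nonpos_of_nonneg (neg_nonpos.2 (by positivity)) (by positivity)
  calc gaussDens d γ x y ≤ (2 * Real.pi * γ ^ 2) ^ (-(d : ℝ) / 2) * 1 := by
        rw [gaussDens]; exact mul_le_mul_of_nonneg_left h (gconst_pos hγ).le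
    _ = _ := mul_one _

lemma gauss_cont : Continuous fun v : H × H => gaussDens d γ v.1 v.2 := by
  unfold gaussDens; fun_prop

lemma hasGradientAt_gauss (hγ : 0 < γ) (x y : H) :
    HasGradientAt (gaussDens d γ x)
      ((-(γ ^ 2)⁻¹ * gaussDens d γ x y) • (y - x)) y := by
  have hf : HasFDerivAt (fun y : H => ‖y - x‖ ^ 2) (2 • (innerSL ℝ (y - x))) y := by
    simpa using ((hasFDerivAt_id y).sub_const x).norm_sq
  have h2 : HasFDerivAt (fun y : H => -(2 * γ ^ 2)⁻¹ * ‖y - x‖ ^ 2)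
      ((-(2 * γ ^ 2)⁻¹) • (2 • (innerSL ℝ (y - x)))) y := hf.const_mul _
  have h3 := (h2.exp).const_mul ((2 * Real.pi * γ ^ 2) ^ (-(d : ℝ) / 2))
  rw [hasGradientAt_iff_hasFDerivAt]
  have heq : ∀ z : H, gaussDens d γ x z
      = (2 * Real.pi * γ ^ 2) ^ (-(d : ℝ) / 2)
        * Real.exp (-(2 * γ ^ 2)⁻¹ * ‖z - x‖ ^ 2) := fun z => gauss_eq x z
  rw [show gaussDens d γ x = fun z => (2 * Real.pi * γ ^ 2) ^ (-(d : ℝ) / 2)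
        * Real.exp (-(2 * γ ^ 2)⁻¹ * ‖z - x‖ ^ 2) from funext heq]
  convert h3 using 1
  case e'_9 => rfl
  ext w
  simp only [InnerProductSpace.toDual_apply_apply, ContinuousLinearMap.smul_apply,
    ContinuousLinearMap.coe_smul', Pi.smul_apply, innerSL_apply_apply, smul_eq_mul,
    real_inner_smul_left, nsmul_eq_mul]
  have hg2 : (γ:ℝ) ^ 2 ≠ 0 := by positivity
  field_simp
  ring
end Gauss

section Main
variable {d : ℕ} {γ : ℝ}
local notation "H" => EuclideanSpace ℝ (Fin d)

lemma gauss_integrable_x (hγ : 0 < γ) (y : H) :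
    Integrable fun x : H => gaussDens d γ x y := by
  have hb : (0:ℝ) < (2 * γ ^ 2)⁻¹ := by positivity
  have h0 : Integrable fun v : H => rexp (-(2 * γ ^ 2)⁻¹ * ‖v‖ ^ 2) :=
    integrable_rexp_neg_mul_sq_norm hb
  have h1 : Integrable fun x : H => rexp (-(2 * γ ^ 2)⁻¹ * ‖y - x‖ ^ 2) :=
    h0.comp_sub_left y
  have := h1.const_mul ((2 * Real.pi * γ ^ 2) ^ (-(d : ℝ) / 2))
  exact this.congr (Filter.Eventually.of_forall fun x => (gauss_eq x y).symm)

lemma gauss_mul_bound (hγ : 0 < γ) (x y₀ : H) {y : H} (hy : y ∈ Metric.ball y₀ 1) :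
    gaussDens d γ x y * ‖y - x‖
      ≤ (2 * Real.pi * γ ^ 2) ^ (-(d : ℝ) / 2) * (1 + 2 / (2 * γ ^ 2)⁻¹)
          * rexp ((2 * γ ^ 2)⁻¹ / 2) * rexp (-((2 * γ ^ 2)⁻¹ / 4) * ‖y₀ - x‖ ^ 2) := by
  set b : ℝ := (2 * γ ^ 2)⁻¹ with hbdef
  have hb : (0:ℝ) < b := by positivity
  set c : ℝ := (2 * Real.pi * γ ^ 2) ^ (-(d : ℝ) / 2) with hcdef
  have hc : (0:ℝ) < c := gconst_pos hγ
  have h1 : gaussDens d γ x y * ‖y - x‖ = c * (‖y - x‖ * rexp (-b * ‖y - x‖ ^ 2)) := by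
    rw [gauss_eq]; ring
  have h2 : ‖y - x‖ * rexp (-b * ‖y - x‖ ^ 2)
      ≤ (1 + 2 / b) * rexp (-(b / 2) * ‖y - x‖ ^ 2) := exp_mul_le hb (norm_nonneg _)
  have hr : ‖y₀ - x‖ ≤ ‖y - x‖ + 1 := by
    have : ‖y₀ - x‖ ≤ ‖y₀ - y‖ + ‖y - x‖ := norm_sub_le_norm_sub_add_norm_sub _ _ _
    have h3 : ‖y₀ - y‖ < 1 := by
      rw [Metric.mem_ball, dist_eq_norm] at hy
      rw [norm_sub_rev]; exact hy
    linarith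
  have h4 : rexp (-(b / 2) * ‖y - x‖ ^ 2) ≤ rexp (b / 2) * rexp (-(b / 4) * ‖y₀ - x‖ ^ 2) := by
    rw [← Real.exp_add, Real.exp_le_exp]
    have hr2 : ‖y₀ - x‖ ^ 2 ≤ (‖y - x‖ + 1) ^ 2 := by
      have := norm_nonneg (y₀ - x); nlinarith [norm_nonneg (y - x)]
    nlinarith [sq_nonneg (‖y - x‖ - 1), hb.le]
  calc gaussDens d γ x y * ‖y - x‖
      ≤ c * ((1 + 2 / b) * rexp (-(b / 2) * ‖y - x‖ ^ 2)) := by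
        rw [h1]; exact mul_le_mul_of_nonneg_left h2 hc.le
    _ ≤ c * ((1 + 2 / b) * (rexp (b / 2) * rexp (-(b / 4) * ‖y₀ - x‖ ^ 2))) := by
        have h5 : (0:ℝ) ≤ 1 + 2 / b := by positivity
        exact mul_le_mul_of_nonneg_left (mul_le_mul_of_nonneg_left h4 h5) hc.le
    _ = c * (1 + 2 / b) * rexp (b / 2) * rexp (-(b / 4) * ‖y₀ - x‖ ^ 2) := by ring

variable (q : EuclideanSpace ℝ (Fin d) → ℝ)

lemma qg_integrable (hγ : 0 < γ) (hq_meas : Measurable q) (hq_nonneg : ∀ x, 0 ≤ q x)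
    (C₀ : ℝ) (hq_bdd : ∀ x, q x ≤ C₀) (y : H) :
    Integrable fun x : H => q x * gaussDens d γ x y := by
  have hgm : Measurable fun x : H => gaussDens d γ x y :=
    (gauss_cont.comp (continuous_id.prodMk continuous_const)).measurable
  refine Integrable.mono' ((gauss_integrable_x hγ y).const_mul C₀)
    (hq_meas.mul hgm).aestronglyMeasurable (Filter.Eventually.of_forall fun x => ?_)
  rw [Real.norm_eq_abs, abs_of_nonneg (mul_nonneg (hq_nonneg x) (gauss_pos hγ x y).le)]
  exact mul_le_mul_of_nonneg_right (hq_bdd x) (gauss_pos hγ x y).le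

lemma p_pos (hγ : 0 < γ) (hq_meas : Measurable q) (hq_nonneg : ∀ x, 0 ≤ q x)
    (hq_one : ∫ x, q x = 1) (C₀ : ℝ) (hq_bdd : ∀ x, q x ≤ C₀) (y : H) :
    0 < ∫ x, q x * gaussDens d γ x y := by
  have hint := qg_integrable q hγ hq_meas hq_nonneg C₀ hq_bdd y
  have hnn : 0 ≤ᵐ[volume] fun x : H => q x * gaussDens d γ x y :=
    Filter.Eventually.of_forall fun x => mul_nonneg (hq_nonneg x) (gauss_pos hγ x y).le
  rcases (integral_nonneg_of_ae hnn).lt_or_eq with h | h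
  · exact h
  exfalso
  have hzero : (fun x : H => q x * gaussDens d γ x y) =ᵐ[volume] 0 :=
    (integral_eq_zero_iff_of_nonneg_ae hnn hint).1 h.symm
  have hq0 : q =ᵐ[volume] 0 := by
    filter_upwards [hzero] with x hx
    have := (gauss_pos hγ x y).ne'
    simpa [mul_eq_zero, this] using hx
  rw [integral_congr_ae hq0] at hq_one
  simp at hq_one

lemma qg_smul_integrable (hγ : 0 < γ) (hq_meas : Measurable q) (hq_nonneg : ∀ x, 0 ≤ q x)
    (C₀ : ℝ) (hq_bdd : ∀ x, q x ≤ C₀) (y₀ : H) :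
    Integrable fun x : H =>
      (-(γ ^ 2)⁻¹ * (q x * gaussDens d γ x y₀)) • (y₀ - x) := by
  have hb : (0:ℝ) < (2 * γ ^ 2)⁻¹ := by positivity
  have hC₀ : 0 ≤ C₀ := le_trans (hq_nonneg 0) (hq_bdd 0)
  have hgm : Measurable fun x : H => gaussDens d γ x y₀ :=
    (gauss_cont.comp (continuous_id.prodMk continuous_const)).measurable
  have hm : AEStronglyMeasurable
      (fun x : H => (-(γ ^ 2)⁻¹ * (q x * gaussDens d γ x y₀)) • (y₀ - x)) volume := by
    apply AEStronglyMeasurable.fun_smul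
    · exact (((hq_meas.mul hgm).const_mul _)).aestronglyMeasurable
    · exact (continuous_const.sub continuous_id).aestronglyMeasurable
  refine Integrable.mono' (((integrable_rexp_neg_mul_sq_norm
      (show (0:ℝ) < (2 * γ ^ 2)⁻¹ / 4 by positivity)).comp_sub_left y₀).const_mul
      ((γ ^ 2)⁻¹ * C₀ * ((2 * Real.pi * γ ^ 2) ^ (-(d : ℝ) / 2) * (1 + 2 / (2 * γ ^ 2)⁻¹)
        * rexp ((2 * γ ^ 2)⁻¹ / 2)))) hm (Filter.Eventually.of_forall fun x => ?_)
  rw [norm_smul, Real.norm_eq_abs]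
  have hg := gauss_pos hγ x y₀
  have habs : |(-(γ ^ 2)⁻¹ * (q x * gaussDens d γ x y₀))|
      = (γ ^ 2)⁻¹ * (q x * gaussDens d γ x y₀) := by
    rw [abs_mul, abs_neg, abs_of_nonneg (by positivity : (0:ℝ) ≤ ((γ:ℝ) ^ 2)⁻¹),
      abs_of_nonneg (mul_nonneg (hq_nonneg x) hg.le)]
  rw [habs]
  have hbnd := gauss_mul_bound hγ x y₀ (Metric.mem_ball_self one_pos)
  calc (γ ^ 2)⁻¹ * (q x * gaussDens d γ x y₀) * ‖y₀ - x‖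
      ≤ (γ ^ 2)⁻¹ * (C₀ * (gaussDens d γ x y₀ * ‖y₀ - x‖)) := by
        have h1 : q x * gaussDens d γ x y₀ * ‖y₀ - x‖
            ≤ C₀ * (gaussDens d γ x y₀ * ‖y₀ - x‖) := by
          rw [← mul_assoc]
          exact mul_le_mul_of_nonneg_right
            (mul_le_mul_of_nonneg_right (hq_bdd x) hg.le) (norm_nonneg _)
        calc (γ ^ 2)⁻¹ * (q x * gaussDens d γ x y₀) * ‖y₀ - x‖
            = (γ ^ 2)⁻¹ * (q x * gaussDens d γ x y₀ * ‖y₀ - x‖) := by ring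
          _ ≤ _ := mul_le_mul_of_nonneg_left h1 (by positivity)
    _ ≤ (γ ^ 2)⁻¹ * C₀ * ((2 * Real.pi * γ ^ 2) ^ (-(d : ℝ) / 2) * (1 + 2 / (2 * γ ^ 2)⁻¹)
          * rexp ((2 * γ ^ 2)⁻¹ / 2)) * rexp (-((2 * γ ^ 2)⁻¹ / 4) * ‖y₀ - x‖ ^ 2) := by
        calc (γ ^ 2)⁻¹ * (C₀ * (gaussDens d γ x y₀ * ‖y₀ - x‖))
            ≤ (γ ^ 2)⁻¹ * (C₀ * ((2 * Real.pi * γ ^ 2) ^ (-(d : ℝ) / 2)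
                * (1 + 2 / (2 * γ ^ 2)⁻¹) * rexp ((2 * γ ^ 2)⁻¹ / 2)
                * rexp (-((2 * γ ^ 2)⁻¹ / 4) * ‖y₀ - x‖ ^ 2))) := by
              exact mul_le_mul_of_nonneg_left
                (mul_le_mul_of_nonneg_left hbnd hC₀) (by positivity)
          _ = _ := by ring

set_option maxHeartbeats 2000000 in
lemma hasGradientAt_p (hγ : 0 < γ) (hq_meas : Measurable q) (hq_nonneg : ∀ x, 0 ≤ q x)
    (C₀ : ℝ) (hq_bdd : ∀ x, q x ≤ C₀) (y₀ : H) :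
    HasGradientAt (fun y : H => ∫ x, q x * gaussDens d γ x y)
      (∫ x, (-(γ ^ 2)⁻¹ * (q x * gaussDens d γ x y₀)) • (y₀ - x)) y₀ := by
  have hb : (0:ℝ) < (2 * γ ^ 2)⁻¹ := by positivity
  have hC₀ : 0 ≤ C₀ := le_trans (hq_nonneg 0) (hq_bdd 0)
  set G : H → H := fun y₀ => ∫ x, (-(γ ^ 2)⁻¹ * (q x * gaussDens d γ x y₀)) • (y₀ - x)
    with hGdef
  rw [hasGradientAt_iff_hasFDerivAt]
  have hmg : ∀ y : H, Measurable fun x : H => gaussDens d γ x y := fun y =>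
    (gauss_cont.comp (continuous_id.prodMk continuous_const)).measurable
  have key := hasFDerivAt_integral_of_dominated_of_fderiv_le
    (𝕜 := ℝ) (μ := (volume : Measure H)) (x₀ := y₀)
    (F := fun (y : H) (x : H) => q x * gaussDens d γ x y)
    (F' := fun (y : H) (x : H) =>
      (InnerProductSpace.toDual ℝ H) ((-(γ ^ 2)⁻¹ * (q x * gaussDens d γ x y)) • (y - x)))
    (bound := fun x : H => (γ ^ 2)⁻¹ * C₀ * ((2 * Real.pi * γ ^ 2) ^ (-(d : ℝ) / 2)
        * (1 + 2 / (2 * γ ^ 2)⁻¹) * rexp ((2 * γ ^ 2)⁻¹ / 2))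
        * rexp (-((2 * γ ^ 2)⁻¹ / 4) * ‖y₀ - x‖ ^ 2))
    (Metric.ball_mem_nhds y₀ one_pos) (Filter.Eventually.of_forall fun y =>
      (hq_meas.mul (hmg y)).aestronglyMeasurable)
    (qg_integrable q hγ hq_meas hq_nonneg C₀ hq_bdd y₀)
    ?meas ?bnd ?bint ?diff
  case meas =>
    apply Continuous.comp_aestronglyMeasurable (LinearIsometryEquiv.continuous _)
    apply AEStronglyMeasurable.fun_smul
    · exact (((hq_meas.mul (hmg y₀)).const_mul _)).aestronglyMeasurable
    · exact (continuous_const.sub continuous_id).aestronglyMeasurable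
  case bnd =>
    refine Filter.Eventually.of_forall fun x => fun y hy => ?_
    rw [LinearIsometryEquiv.norm_map, norm_smul, Real.norm_eq_abs]
    have hg := gauss_pos hγ x y
    have habs : |(-(γ ^ 2)⁻¹ * (q x * gaussDens d γ x y))|
        = (γ ^ 2)⁻¹ * (q x * gaussDens d γ x y) := by
      rw [abs_mul, abs_neg, abs_of_nonneg (by positivity : (0:ℝ) ≤ ((γ:ℝ) ^ 2)⁻¹),
        abs_of_nonneg (mul_nonneg (hq_nonneg x) hg.le)]
    rw [habs]
    have hbnd := gauss_mul_bound hγ x y₀ hy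
    have h1 : q x * gaussDens d γ x y * ‖y - x‖
        ≤ C₀ * (gaussDens d γ x y * ‖y - x‖) := by
      rw [← mul_assoc]
      exact mul_le_mul_of_nonneg_right
        (mul_le_mul_of_nonneg_right (hq_bdd x) hg.le) (norm_nonneg _)
    calc (γ ^ 2)⁻¹ * (q x * gaussDens d γ x y) * ‖y - x‖
        = (γ ^ 2)⁻¹ * (q x * gaussDens d γ x y * ‖y - x‖) := by ring
      _ ≤ (γ ^ 2)⁻¹ * (C₀ * (gaussDens d γ x y * ‖y - x‖)) :=
          mul_le_mul_of_nonneg_left h1 (by positivity)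
      _ ≤ (γ ^ 2)⁻¹ * (C₀ * ((2 * Real.pi * γ ^ 2) ^ (-(d : ℝ) / 2)
            * (1 + 2 / (2 * γ ^ 2)⁻¹) * rexp ((2 * γ ^ 2)⁻¹ / 2)
            * rexp (-((2 * γ ^ 2)⁻¹ / 4) * ‖y₀ - x‖ ^ 2))) :=
          mul_le_mul_of_nonneg_left (mul_le_mul_of_nonneg_left hbnd hC₀) (by positivity)
      _ = _ := by ring
  case bint =>
    exact ((integrable_rexp_neg_mul_sq_norm
      (show (0:ℝ) < (2 * γ ^ 2)⁻¹ / 4 by positivity)).comp_sub_left y₀).const_mul _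
  case diff =>
    refine Filter.Eventually.of_forall fun x => fun y _hy => ?_
    show HasFDerivAt (fun y' => q x * gaussDens d γ x y')
      ((InnerProductSpace.toDual ℝ H) ((-(γ ^ 2)⁻¹ * (q x * gaussDens d γ x y)) • (y - x))) y
    have hgrad := (hasGradientAt_gauss hγ x y).hasFDerivAt
    have h4 : (-(γ ^ 2)⁻¹ * (q x * gaussDens d γ x y)) • (y - x)
        = q x • ((-(γ ^ 2)⁻¹ * gaussDens d γ x y) • (y - x)) := by
      rw [smul_smul, mul_left_comm]
    rw [h4, (InnerProductSpace.toDual ℝ H).map_smul]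
    exact hgrad.const_mul (q x)
  have heq : (∫ x, (InnerProductSpace.toDual ℝ H)
        ((-(γ ^ 2)⁻¹ * (q x * gaussDens d γ x y₀)) • (y₀ - x)))
      = (InnerProductSpace.toDual ℝ H) (G y₀) := by
    rw [hGdef]
    exact (InnerProductSpace.toDual ℝ H).toLinearIsometry.integral_comp_comm _
  rw [heq] at key
  exact key

lemma gradient_log_p (hγ : 0 < γ) (hq_meas : Measurable q) (hq_nonneg : ∀ x, 0 ≤ q x)
    (hq_one : ∫ x, q x = 1) (C₀ : ℝ) (hq_bdd : ∀ x, q x ≤ C₀) (y : H) :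
    gradient (fun w => Real.log (∫ x, q x * gaussDens d γ x w)) y
      = (∫ x, q x * gaussDens d γ x y)⁻¹
          • (∫ x, (-(γ ^ 2)⁻¹ * (q x * gaussDens d γ x y)) • (y - x)) := by
  have hp := hasGradientAt_p q hγ hq_meas hq_nonneg C₀ hq_bdd y
  have hppos := p_pos q hγ hq_meas hq_nonneg hq_one C₀ hq_bdd y
  have hlog : HasDerivAt Real.log (∫ x, q x * gaussDens d γ x y)⁻¹
      (∫ x, q x * gaussDens d γ x y) := Real.hasDerivAt_log hppos.ne'
  have hcomp := hlog.comp_hasFDerivAt y hp.hasFDerivAt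
  have h2 : (∫ x, q x * gaussDens d γ x y)⁻¹
        • (InnerProductSpace.toDual ℝ H)
          (∫ x, (-(γ ^ 2)⁻¹ * (q x * gaussDens d γ x y)) • (y - x))
      = (InnerProductSpace.toDual ℝ H) ((∫ x, q x * gaussDens d γ x y)⁻¹
          • (∫ x, (-(γ ^ 2)⁻¹ * (q x * gaussDens d γ x y)) • (y - x))) :=
    ((InnerProductSpace.toDual ℝ H).map_smul _ _).symm
  rw [h2] at hcomp
  have : HasGradientAt (fun w => Real.log (∫ x, q x * gaussDens d γ x w))
      ((∫ x, q x * gaussDens d γ x y)⁻¹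
        • (∫ x, (-(γ ^ 2)⁻¹ * (q x * gaussDens d γ x y)) • (y - x))) y := by
    rw [hasGradientAt_iff_hasFDerivAt]
    exact hcomp
  exact this.gradient
end Main


set_option maxHeartbeats 1000000 in
/-- Denoising score matching equals score matching up to a constant: with `X` of density
`q`, `Y = X + γZ` (joint density `q(x) N(y; x, γ²I)`), marginal density
`p(y) = ∫ q(x) N(y; x, γ²I) dx` and conditional score `∇_y log p(y|x) = −(y−x)/γ²`, for any
measurable vector field `s` with `E[‖s(Y)‖²] < ∞`,
`E[‖s(Y) − ∇_y log p(Y|X)‖²] = E[‖s(Y) − ∇ log p(Y)‖²] + C`, where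
`C = E[‖∇_y log p(Y|X)‖²] − E[‖∇ log p(Y)‖²]` does not depend on `s`. -/
theorem dsm_eq_sm_plus_const {d : ℕ} (γ : ℝ) (hγ : 0 < γ)
    (q : EuclideanSpace ℝ (Fin d) → ℝ)
    (hq_meas : Measurable q) (hq_nonneg : ∀ x, 0 ≤ q x) (hq_one : ∫ x, q x = 1)
    (C₀ : ℝ) (hq_bdd : ∀ x, q x ≤ C₀)
    (s : EuclideanSpace ℝ (Fin d) → EuclideanSpace ℝ (Fin d)) (hs : Measurable s)
    (h1 : Integrable (fun v : EuclideanSpace ℝ (Fin d) × EuclideanSpace ℝ (Fin d) =>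
        q v.1 * gaussDens d γ v.1 v.2 * ‖s v.2‖ ^ 2))
    (h2 : Integrable (fun v : EuclideanSpace ℝ (Fin d) × EuclideanSpace ℝ (Fin d) =>
        q v.1 * gaussDens d γ v.1 v.2 * ‖-(γ ^ 2)⁻¹ • (v.2 - v.1)‖ ^ 2))
    (h3 : Integrable (fun v : EuclideanSpace ℝ (Fin d) × EuclideanSpace ℝ (Fin d) =>
        q v.1 * gaussDens d γ v.1 v.2 *
          ‖gradient (fun w => Real.log (∫ x, q x * gaussDens d γ x w)) v.2‖ ^ 2)) :
    (∫ v : EuclideanSpace ℝ (Fin d) × EuclideanSpace ℝ (Fin d),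
        q v.1 * gaussDens d γ v.1 v.2 * ‖s v.2 - -(γ ^ 2)⁻¹ • (v.2 - v.1)‖ ^ 2)
      = (∫ v : EuclideanSpace ℝ (Fin d) × EuclideanSpace ℝ (Fin d),
          q v.1 * gaussDens d γ v.1 v.2 *
            ‖s v.2 - gradient (fun w => Real.log (∫ x, q x * gaussDens d γ x w)) v.2‖ ^ 2)
        + ((∫ v : EuclideanSpace ℝ (Fin d) × EuclideanSpace ℝ (Fin d),
              q v.1 * gaussDens d γ v.1 v.2 * ‖-(γ ^ 2)⁻¹ • (v.2 - v.1)‖ ^ 2)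
          - (∫ v : EuclideanSpace ℝ (Fin d) × EuclideanSpace ℝ (Fin d),
              q v.1 * gaussDens d γ v.1 v.2 *
                ‖gradient (fun w => Real.log (∫ x, q x * gaussDens d γ x w)) v.2‖ ^ 2)) := by
  classical
  have hbeq : ∀ y : EuclideanSpace ℝ (Fin d),
      gradient (fun w => Real.log (∫ x, q x * gaussDens d γ x w)) y
      = (∫ x, q x * gaussDens d γ x y)⁻¹
          • (∫ x, (-(γ ^ 2)⁻¹ * (q x * gaussDens d γ x y)) • (y - x)) := fun y =>
    gradient_log_p q hγ hq_meas hq_nonneg hq_one C₀ hq_bdd y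
  set P : EuclideanSpace ℝ (Fin d) → ℝ := fun y => ∫ x, q x * gaussDens d γ x y with hPdef
  set G : EuclideanSpace ℝ (Fin d) → EuclideanSpace ℝ (Fin d) :=
    fun y => ∫ x, (-(γ ^ 2)⁻¹ * (q x * gaussDens d γ x y)) • (y - x) with hGdef
  set B : EuclideanSpace ℝ (Fin d) → EuclideanSpace ℝ (Fin d) :=
    fun y => (P y)⁻¹ • G y with hBdef
  have hbeq' : ∀ y : EuclideanSpace ℝ (Fin d),
      gradient (fun w => Real.log (∫ x, q x * gaussDens d γ x w)) y = B y := hbeq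
  simp only [hbeq'] at h3 ⊢
  -- measurability facts
  have hW_meas : Measurable fun v : EuclideanSpace ℝ (Fin d) × EuclideanSpace ℝ (Fin d) =>
      q v.1 * gaussDens d γ v.1 v.2 :=
    (hq_meas.comp measurable_fst).mul gauss_cont.measurable
  have hW_nonneg : ∀ v : EuclideanSpace ℝ (Fin d) × EuclideanSpace ℝ (Fin d),
      0 ≤ q v.1 * gaussDens d γ v.1 v.2 := fun v =>
    mul_nonneg (hq_nonneg _) (gauss_pos hγ _ _).le
  have hs2 : Measurable fun v : EuclideanSpace ℝ (Fin d) × EuclideanSpace ℝ (Fin d) =>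
      s v.2 := hs.comp measurable_snd
  have hA_meas : Measurable fun v : EuclideanSpace ℝ (Fin d) × EuclideanSpace ℝ (Fin d) =>
      (-(γ ^ 2)⁻¹ : ℝ) • (v.2 - v.1) :=
    ((continuous_snd.sub continuous_fst).fun_const_smul _).measurable
  have hP_cont : Continuous P := by
    rw [continuous_iff_continuousAt]
    intro y
    exact (hasGradientAt_p q hγ hq_meas hq_nonneg C₀ hq_bdd
      y).hasFDerivAt.differentiableAt.continuousAt
  have hG_meas : Measurable G := by
    have hJ : Measurable fun z : EuclideanSpace ℝ (Fin d) × EuclideanSpace ℝ (Fin d) =>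
        (-(γ ^ 2)⁻¹ * (q z.2 * gaussDens d γ z.2 z.1)) • (z.1 - z.2) := by
      apply Measurable.fun_smul
      · exact (((hq_meas.comp measurable_snd).mul
          ((gauss_cont.comp continuous_swap).measurable)).const_mul _)
      · exact (continuous_fst.sub continuous_snd).measurable
    exact (hJ.stronglyMeasurable.integral_prod_right').measurable
  have hB_meas : Measurable B := (hP_cont.measurable.inv).smul hG_meas
  have hB2 : Measurable fun v : EuclideanSpace ℝ (Fin d) × EuclideanSpace ℝ (Fin d) =>
      B v.2 := hB_meas.comp measurable_snd
  -- cross-term integrability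
  have cross_int : ∀ (b : EuclideanSpace ℝ (Fin d) × EuclideanSpace ℝ (Fin d)
        → EuclideanSpace ℝ (Fin d)), Measurable b →
      Integrable (fun v : EuclideanSpace ℝ (Fin d) × EuclideanSpace ℝ (Fin d) =>
        q v.1 * gaussDens d γ v.1 v.2 * ‖b v‖ ^ 2) →
      Integrable (fun v : EuclideanSpace ℝ (Fin d) × EuclideanSpace ℝ (Fin d) =>
        q v.1 * gaussDens d γ v.1 v.2 * ⟪s v.2, b v⟫) := by
    intro b hb hbint
    have hdom : Integrable (fun v : EuclideanSpace ℝ (Fin d) × EuclideanSpace ℝ (Fin d) =>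
        (1/2 : ℝ) * (q v.1 * gaussDens d γ v.1 v.2 * ‖s v.2‖ ^ 2
          + q v.1 * gaussDens d γ v.1 v.2 * ‖b v‖ ^ 2)) := (h1.add hbint).const_mul (1/2)
    refine Integrable.mono' hdom
      ((hW_meas.mul (hs2.inner hb)).aestronglyMeasurable)
      (Filter.Eventually.of_forall fun v => ?_)
    rw [Real.norm_eq_abs, abs_mul, abs_of_nonneg (hW_nonneg v)]
    have hinner := abs_real_inner_le_norm (s v.2) (b v)
    have hW := hW_nonneg v
    have h' : |⟪s v.2, b v⟫| ≤ (1/2) * (‖s v.2‖ ^ 2 + ‖b v‖ ^ 2) := by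
      nlinarith [sq_nonneg (‖s v.2‖ - ‖b v‖), norm_nonneg (s v.2), norm_nonneg (b v)]
    calc q v.1 * gaussDens d γ v.1 v.2 * |⟪s v.2, b v⟫|
        ≤ q v.1 * gaussDens d γ v.1 v.2 * ((1/2) * (‖s v.2‖ ^ 2 + ‖b v‖ ^ 2)) :=
          mul_le_mul_of_nonneg_left h' hW
      _ = 1/2 * (q v.1 * gaussDens d γ v.1 v.2 * ‖s v.2‖ ^ 2
            + q v.1 * gaussDens d γ v.1 v.2 * ‖b v‖ ^ 2) := by ring
  have intA : Integrable (fun v : EuclideanSpace ℝ (Fin d) × EuclideanSpace ℝ (Fin d) =>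
      q v.1 * gaussDens d γ v.1 v.2 * ⟪s v.2, -(γ ^ 2)⁻¹ • (v.2 - v.1)⟫) :=
    cross_int _ hA_meas h2
  have intB : Integrable (fun v : EuclideanSpace ℝ (Fin d) × EuclideanSpace ℝ (Fin d) =>
      q v.1 * gaussDens d γ v.1 v.2 * ⟪s v.2, B v.2⟫) :=
    cross_int _ hB2 h3
  -- the cross terms agree
  have inner_eqA : ∀ y : EuclideanSpace ℝ (Fin d),
      (∫ x, q x * gaussDens d γ x y * ⟪s y, -(γ ^ 2)⁻¹ • (y - x)⟫) = ⟪s y, G y⟫ := by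
    intro y
    have hpt : ∀ x : EuclideanSpace ℝ (Fin d),
        q x * gaussDens d γ x y * ⟪s y, -(γ ^ 2)⁻¹ • (y - x)⟫
        = ⟪s y, (-(γ ^ 2)⁻¹ * (q x * gaussDens d γ x y)) • (y - x)⟫ := by
      intro x
      rw [real_inner_smul_right, real_inner_smul_right]
      ring
    rw [integral_congr_ae (Filter.Eventually.of_forall hpt)]
    exact integral_inner (qg_smul_integrable q hγ hq_meas hq_nonneg C₀ hq_bdd y) (s y)
  have inner_eqB : ∀ y : EuclideanSpace ℝ (Fin d),
      (∫ x, q x * gaussDens d γ x y * ⟪s y, B y⟫) = ⟪s y, G y⟫ := by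
    intro y
    rw [integral_mul_const]
    have hppos := p_pos q hγ hq_meas hq_nonneg hq_one C₀ hq_bdd y
    have hBy : B y = (P y)⁻¹ • G y := rfl
    rw [hBy, real_inner_smul_right]
    have hP : P y = ∫ x, q x * gaussDens d γ x y := rfl
    rw [← hP] at hppos ⊢
    field_simp
  have key : (∫ v : EuclideanSpace ℝ (Fin d) × EuclideanSpace ℝ (Fin d),
        q v.1 * gaussDens d γ v.1 v.2 * ⟪s v.2, -(γ ^ 2)⁻¹ • (v.2 - v.1)⟫)
      = ∫ v : EuclideanSpace ℝ (Fin d) × EuclideanSpace ℝ (Fin d),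
        q v.1 * gaussDens d γ v.1 v.2 * ⟪s v.2, B v.2⟫ := by
    rw [Measure.volume_eq_prod] at intA intB ⊢
    rw [integral_prod_symm _ intA, integral_prod_symm _ intB]
    congr 1
    funext y
    rw [inner_eqA y, inner_eqB y]
  -- expand the squares
  have expand : ∀ (b : EuclideanSpace ℝ (Fin d) × EuclideanSpace ℝ (Fin d)
        → EuclideanSpace ℝ (Fin d)),
      Integrable (fun v : EuclideanSpace ℝ (Fin d) × EuclideanSpace ℝ (Fin d) =>
        q v.1 * gaussDens d γ v.1 v.2 * ‖b v‖ ^ 2) →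
      Integrable (fun v : EuclideanSpace ℝ (Fin d) × EuclideanSpace ℝ (Fin d) =>
        q v.1 * gaussDens d γ v.1 v.2 * ⟪s v.2, b v⟫) →
      (∫ v : EuclideanSpace ℝ (Fin d) × EuclideanSpace ℝ (Fin d),
          q v.1 * gaussDens d γ v.1 v.2 * ‖s v.2 - b v‖ ^ 2)
        = (∫ v : EuclideanSpace ℝ (Fin d) × EuclideanSpace ℝ (Fin d),
            q v.1 * gaussDens d γ v.1 v.2 * ‖s v.2‖ ^ 2)
          - 2 * (∫ v : EuclideanSpace ℝ (Fin d) × EuclideanSpace ℝ (Fin d),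
            q v.1 * gaussDens d γ v.1 v.2 * ⟪s v.2, b v⟫)
          + ∫ v : EuclideanSpace ℝ (Fin d) × EuclideanSpace ℝ (Fin d),
            q v.1 * gaussDens d γ v.1 v.2 * ‖b v‖ ^ 2 := by
    intro b hbint hcross
    have hpt : ∀ v : EuclideanSpace ℝ (Fin d) × EuclideanSpace ℝ (Fin d),
        q v.1 * gaussDens d γ v.1 v.2 * ‖s v.2 - b v‖ ^ 2
        = (q v.1 * gaussDens d γ v.1 v.2 * ‖s v.2‖ ^ 2
            - 2 * (q v.1 * gaussDens d γ v.1 v.2 * ⟪s v.2, b v⟫))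
          + q v.1 * gaussDens d γ v.1 v.2 * ‖b v‖ ^ 2 := by
      intro v
      rw [norm_sub_sq_real]
      ring
    have hsub : Integrable (fun v : EuclideanSpace ℝ (Fin d) × EuclideanSpace ℝ (Fin d) =>
        q v.1 * gaussDens d γ v.1 v.2 * ‖s v.2‖ ^ 2
          - 2 * (q v.1 * gaussDens d γ v.1 v.2 * ⟪s v.2, b v⟫)) :=
      h1.sub (hcross.const_mul 2)
    rw [integral_congr_ae (Filter.Eventually.of_forall hpt),
      integral_add hsub hbint, integral_sub h1 (hcross.const_mul 2), integral_const_mul]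
  rw [expand _ h2 intA, expand _ h3 intB, key]
  ring
end
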